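/- arXiv:1110.5293 — 4 statements merged into one kernel-verified Lean document; each statement's English description precedes it below -/
import Mathlib

section
/- Let C be a small category, V a cocomplete symmetric monoidal closed category, F, G : C → V functors with each GC having a right dual (GC)^∧. Then the internal hom Hom(Nat^∨(F,G), I) is an end ∫_C Hom(FC, GC), where Nat^∨(F,G) := ∫^C FC ⊗ (GC)^∧. In particular, morphisms Nat^∨(F,G) → I in V correspond bijectively to natural transformations F ⇒ G. -/
open CategoryTheory MonoidalCategory MonoidalClosed Opposite

/-!
Closedness, the braiding and the exact pairing of `D c` with `G c` transpose a map
`F c ⊗ D c ⟶ [Z, I]` into a map `Z ⟶ [F c, G c]`, and dinaturality of the coevaluations makes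
this transposition exchange the cowedge condition with the wedge condition. Hence, naturally
in `Z`, `(Z ⟶ [T, I]) ≃ (T ⟶ [Z, I]) ≃ {cowedges into [Z, I]} ≃ {wedges out of Z}`, so `[T, I]`
represents wedges: it is the end `∫_c [F c, G c]`. The same transposition with target `I`
identifies cowedges into `I`, i.e. maps `T ⟶ I`, with natural transformations `F ⟶ G`.
-/

namespace NatCoend

variable {V : Type*} [Category V] [MonoidalCategory V]

section Duality

def tensorDualUnitHomEquiv (A Y X : V) [ExactPairing Y X] : (A ⊗ Y ⟶ 𝟙_ V) ≃ (A ⟶ X) :=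
  (tensorRightHomEquiv A Y X (𝟙_ V)).trans ((Iso.refl A).homCongr (λ_ X))

variable {Y X : V} [ExactPairing Y X]

lemma tensorDualUnitHomEquiv_apply (A : V) (u : A ⊗ Y ⟶ 𝟙_ V) :
    tensorDualUnitHomEquiv A Y X u = tensorRightHomEquiv A Y X (𝟙_ V) u ≫ (λ_ X).hom := by
  simp [tensorDualUnitHomEquiv, Iso.homCongr]

lemma tensorDualUnitHomEquiv_whiskerRight_comp {A A' : V} (g : A ⟶ A')
    (u : A' ⊗ Y ⟶ 𝟙_ V) :
    tensorDualUnitHomEquiv A Y X (g ▷ Y ≫ u) = g ≫ tensorDualUnitHomEquiv A' Y X u := by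
  have : tensorRightHomEquiv A Y X (𝟙_ V) (g ▷ Y ≫ u) = g ≫ tensorRightHomEquiv A' Y X _ u :=
    (Equiv.eq_symm_apply _).mp <| by
      rw [tensorRightHomEquiv_symm_naturality, Equiv.symm_apply_apply]
  rw [tensorDualUnitHomEquiv_apply, tensorDualUnitHomEquiv_apply, this, Category.assoc]

lemma tensorDualUnitHomEquiv_whiskerLeft_comp {Y' X' : V} [ExactPairing Y' X'] {A : V}
    (d : Y' ⟶ Y) (g : X ⟶ X') (h : η_ Y' X' ≫ d ▷ X' = η_ Y X ≫ Y ◁ g) (u : A ⊗ Y ⟶ 𝟙_ V) :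
    tensorDualUnitHomEquiv A Y' X' (A ◁ d ≫ u) = tensorDualUnitHomEquiv A Y X u ≫ g := by
  simp only [tensorDualUnitHomEquiv_apply, tensorRightHomEquiv, Equiv.coe_fn_mk,
    comp_whiskerRight, Category.assoc]
  rw [← associator_inv_naturality_middle_assoc, ← MonoidalCategory.whiskerLeft_comp_assoc, h,
    MonoidalCategory.whiskerLeft_comp_assoc, associator_inv_naturality_right_assoc,
    whisker_exchange_assoc, leftUnitor_naturality]

end Duality

section Braided

variable [BraidedCategory V] [MonoidalClosed V]

def tensorDualIhomEquiv (Z A Y X : V) [ExactPairing Y X] :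
    (A ⊗ Y ⟶ (ihom Z).obj (𝟙_ V)) ≃ (Z ⟶ (ihom A).obj X) where
  toFun v :=
    curry ((β_ Z A).inv ≫ tensorDualUnitHomEquiv (Z ⊗ A) Y X ((α_ Z A Y).hom ≫ uncurry v))
  invFun w :=
    curry ((α_ Z A Y).inv ≫ (tensorDualUnitHomEquiv (Z ⊗ A) Y X).symm ((β_ Z A).hom ≫ uncurry w))
  left_inv v := by simp
  right_inv w := by simp

variable {Y X : V} [ExactPairing Y X]

lemma tensorDualIhomEquiv_apply {Z A : V} (v : A ⊗ Y ⟶ (ihom Z).obj (𝟙_ V)) :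
    tensorDualIhomEquiv Z A Y X v =
      curry ((β_ Z A).inv ≫ tensorDualUnitHomEquiv (Z ⊗ A) Y X ((α_ Z A Y).hom ≫ uncurry v)) :=
  rfl

lemma tensorDualIhomEquiv_comp_pre {Z Z' A : V} (f : Z ⟶ Z')
    (v : A ⊗ Y ⟶ (ihom Z').obj (𝟙_ V)) :
    tensorDualIhomEquiv Z A Y X (v ≫ (pre f).app (𝟙_ V)) =
      f ≫ tensorDualIhomEquiv Z' A Y X v := by
  rw [tensorDualIhomEquiv_apply, tensorDualIhomEquiv_apply, uncurry_pre_app,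
    ← associator_naturality_left_assoc, tensorDualUnitHomEquiv_whiskerRight_comp,
    ← BraidedCategory.braiding_inv_naturality_right_assoc, curry_natural_left]

lemma tensorDualIhomEquiv_whiskerRight_comp {Z A A' : V} (g : A ⟶ A')
    (v : A' ⊗ Y ⟶ (ihom Z).obj (𝟙_ V)) :
    tensorDualIhomEquiv Z A Y X (g ▷ Y ≫ v) =
      tensorDualIhomEquiv Z A' Y X v ≫ (pre g).app X := by
  rw [tensorDualIhomEquiv_apply, tensorDualIhomEquiv_apply, uncurry_natural_left,
    ← associator_naturality_middle_assoc, tensorDualUnitHomEquiv_whiskerRight_comp,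
    ← BraidedCategory.braiding_inv_naturality_left_assoc, curry_pre_app]

lemma tensorDualIhomEquiv_whiskerLeft_comp {Y' X' : V} [ExactPairing Y' X'] {Z A : V}
    (d : Y' ⟶ Y) (g : X ⟶ X') (h : η_ Y' X' ≫ d ▷ X' = η_ Y X ≫ Y ◁ g)
    (v : A ⊗ Y ⟶ (ihom Z).obj (𝟙_ V)) :
    tensorDualIhomEquiv Z A Y' X' (A ◁ d ≫ v) =
      tensorDualIhomEquiv Z A Y X v ≫ (ihom A).map g := by
  rw [tensorDualIhomEquiv_apply, tensorDualIhomEquiv_apply, uncurry_natural_left,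
    ← associator_naturality_right_assoc, tensorDualUnitHomEquiv_whiskerLeft_comp d g h,
    ← Category.assoc, curry_natural_right]

def homIhomUnitEquiv (Z T : V) : (Z ⟶ (ihom T).obj (𝟙_ V)) ≃ (T ⟶ (ihom Z).obj (𝟙_ V)) where
  toFun h := curry ((β_ T Z).inv ≫ uncurry h)
  invFun k := curry ((β_ T Z).hom ≫ uncurry k)
  left_inv h := by simp
  right_inv k := by simp

lemma homIhomUnitEquiv_comp {Z Z' T : V} (f : Z ⟶ Z') (h : Z' ⟶ (ihom T).obj (𝟙_ V)) :
    homIhomUnitEquiv Z T (f ≫ h) = homIhomUnitEquiv Z' T h ≫ (pre f).app (𝟙_ V) := by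
  simp only [homIhomUnitEquiv, Equiv.coe_fn_mk]
  rw [uncurry_natural_left, ← BraidedCategory.braiding_inv_naturality_left_assoc, curry_pre_app]

end Braided

section Coend

variable {C : Type*} [Category C] (F G : C ⥤ V) (D : Cᵒᵖ ⥤ V)

/-- With `D c` the dual of `G c`, these are the cowedges of the coend `Nat^∨(F, G)`. -/
def Cowedge (Z : V) : Type _ :=
  {w : ∀ c : C, F.obj c ⊗ D.obj (op c) ⟶ Z //
    ∀ {c c' : C} (f : c ⟶ c'), F.map f ▷ D.obj (op c') ≫ w c' = F.obj c ◁ D.map f.op ≫ w c}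

variable {F D}

def Cowedge.postcomp {T Z : V} (ι : Cowedge F D T) (h : T ⟶ Z) : Cowedge F D Z :=
  ⟨fun c => ι.1 c ≫ h, fun f => by rw [← Category.assoc, ι.2 f, Category.assoc]⟩

lemma Cowedge.postcomp_comp {T Z Z' : V} (ι : Cowedge F D T) (h : T ⟶ Z) (k : Z ⟶ Z') :
    ι.postcomp (h ≫ k) = (ι.postcomp h).postcomp k :=
  Subtype.ext <| funext fun _ => (Category.assoc _ _ _).symm

lemma Cowedge.postcomp_eq_iff {T Z : V} (ι : Cowedge F D T) (h : T ⟶ Z) (w : Cowedge F D Z) :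
    ι.postcomp h = w ↔ ∀ c, ι.1 c ≫ h = w.1 c :=
  Subtype.ext_iff.trans funext_iff

def Cowedge.IsUniversal {T : V} (ι : Cowedge F D T) : Prop :=
  ∀ Z : V, Function.Bijective (ι.postcomp : (T ⟶ Z) → Cowedge F D Z)

lemma Cowedge.isUniversal_of_existsUnique {T : V} (ι : Cowedge F D T)
    (huniv : ∀ (Z : V) (w : Cowedge F D Z), ∃! h : T ⟶ Z, ∀ c, ι.1 c ≫ h = w.1 c) :
    ι.IsUniversal := fun Z =>
  (Function.bijective_iff_existsUnique _).mpr fun w => by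
    simpa only [Cowedge.postcomp_eq_iff] using huniv Z w

section NatTrans

variable [∀ c, ExactPairing (D.obj (op c)) (G.obj c)]

variable (D) in
def CoevaluationDinatural : Prop :=
  ∀ {c c' : C} (f : c ⟶ c'),
    η_ (D.obj (op c')) (G.obj c') ≫ D.map f.op ▷ G.obj c' =
      η_ (D.obj (op c)) (G.obj c) ≫ D.obj (op c) ◁ G.map f

lemma cowedge_condition_iff_naturality
    (hη : CoevaluationDinatural G D)
    {c c' : C} (f : c ⟶ c') (u : F.obj c ⊗ D.obj (op c) ⟶ 𝟙_ V)
    (u' : F.obj c' ⊗ D.obj (op c') ⟶ 𝟙_ V) :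
    F.map f ▷ D.obj (op c') ≫ u' = F.obj c ◁ D.map f.op ≫ u ↔
      F.map f ≫ tensorDualUnitHomEquiv _ _ (G.obj c') u' =
        tensorDualUnitHomEquiv _ _ (G.obj c) u ≫ G.map f := by
  rw [← (tensorDualUnitHomEquiv (F.obj c) _ (G.obj c')).apply_eq_iff_eq,
    tensorDualUnitHomEquiv_whiskerRight_comp,
    tensorDualUnitHomEquiv_whiskerLeft_comp _ _ (hη f)]

def cowedgeUnitEquivNatTrans
    (hη : CoevaluationDinatural G D) :
    Cowedge F D (𝟙_ V) ≃ (F ⟶ G) where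
  toFun w :=
    { app c := tensorDualUnitHomEquiv _ _ _ (w.1 c)
      naturality _ _ f := (cowedge_condition_iff_naturality G hη f _ _).mp (w.2 f) }
  invFun α := ⟨fun c => (tensorDualUnitHomEquiv _ _ _).symm (α.app c), fun f =>
    (cowedge_condition_iff_naturality G hη f _ _).mpr (by simp)⟩
  left_inv w := Subtype.ext <| funext fun c => Equiv.symm_apply_apply _ _
  right_inv α := by ext c; exact Equiv.apply_symm_apply _ _

end NatTrans

variable [MonoidalClosed V] (F)

def Wedge (Z : V) : Type _ :=
  {w : ∀ c : C, Z ⟶ (ihom (F.obj c)).obj (G.obj c) //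
    ∀ {c c' : C} (f : c ⟶ c'),
      w c ≫ (ihom (F.obj c)).map (G.map f) = w c' ≫ (pre (F.map f)).app (G.obj c')}

variable {F G}

def Wedge.precomp {E Z : V} (π : Wedge F G E) (h : Z ⟶ E) : Wedge F G Z :=
  ⟨fun c => h ≫ π.1 c, fun f => by rw [Category.assoc, π.2 f, Category.assoc]⟩

lemma Wedge.precomp_eq_iff {E Z : V} (π : Wedge F G E) (h : Z ⟶ E) (w : Wedge F G Z) :
    π.precomp h = w ↔ ∀ c, h ≫ π.1 c = w.1 c :=
  Subtype.ext_iff.trans funext_iff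

def Wedge.IsUniversal {E : V} (π : Wedge F G E) : Prop :=
  ∀ Z : V, Function.Bijective (π.precomp : (Z ⟶ E) → Wedge F G Z)

lemma Wedge.IsUniversal.existsUnique {E : V} {π : Wedge F G E} (hπ : π.IsUniversal) {Z : V}
    (w : Wedge F G Z) : ∃! h : Z ⟶ E, ∀ c, h ≫ π.1 c = w.1 c := by
  simpa only [Wedge.precomp_eq_iff] using
    (Function.bijective_iff_existsUnique _).mp (hπ Z) w

section EndOfDuals

variable [BraidedCategory V] [∀ c, ExactPairing (D.obj (op c)) (G.obj c)]

lemma cowedge_condition_iff_wedge_condition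
    (hη : CoevaluationDinatural G D)
    {Z : V} {c c' : C} (f : c ⟶ c') (u : F.obj c ⊗ D.obj (op c) ⟶ (ihom Z).obj (𝟙_ V))
    (u' : F.obj c' ⊗ D.obj (op c') ⟶ (ihom Z).obj (𝟙_ V)) :
    F.map f ▷ D.obj (op c') ≫ u' = F.obj c ◁ D.map f.op ≫ u ↔
      tensorDualIhomEquiv Z _ _ (G.obj c) u ≫ (ihom (F.obj c)).map (G.map f) =
        tensorDualIhomEquiv Z _ _ (G.obj c') u' ≫ (pre (F.map f)).app (G.obj c') := by
  rw [← (tensorDualIhomEquiv Z (F.obj c) _ (G.obj c')).apply_eq_iff_eq,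
    tensorDualIhomEquiv_whiskerRight_comp,
    tensorDualIhomEquiv_whiskerLeft_comp _ _ (hη f), eq_comm]

def cowedgeIhomEquivWedge
    (hη : CoevaluationDinatural G D) (Z : V) :
    Cowedge F D ((ihom Z).obj (𝟙_ V)) ≃ Wedge F G Z :=
  (Equiv.piCongrRight fun c => tensorDualIhomEquiv Z (F.obj c) _ (G.obj c)).subtypeEquiv
    fun _ => ⟨fun hw _ _ f => (cowedge_condition_iff_wedge_condition hη f _ _).mp (hw f),
      fun hw _ _ f => (cowedge_condition_iff_wedge_condition hη f _ _).mpr (hw f)⟩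

lemma cowedgeIhomEquivWedge_postcomp_pre
    (hη : CoevaluationDinatural G D)
    {Z Z' : V} (h : Z ⟶ Z') (w : Cowedge F D ((ihom Z').obj (𝟙_ V))) :
    cowedgeIhomEquivWedge hη Z (w.postcomp ((pre h).app (𝟙_ V))) =
      (cowedgeIhomEquivWedge hη Z' w).precomp h :=
  Subtype.ext <| funext fun _ => tensorDualIhomEquiv_comp_pre h _

lemma Cowedge.IsUniversal.exists_isUniversal_wedge_ihom
    (hη : CoevaluationDinatural G D)
    {T : V} {ι : Cowedge F D T} (hι : ι.IsUniversal) :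
    ∃ π : Wedge F G ((ihom T).obj (𝟙_ V)), π.IsUniversal := by
  let Φ (Z : V) : (Z ⟶ (ihom T).obj (𝟙_ V)) ≃ Wedge F G Z :=
    (homIhomUnitEquiv Z T).trans <|
      (Equiv.ofBijective _ (hι _)).trans (cowedgeIhomEquivWedge hη Z)
  refine ⟨Φ _ (𝟙 _), fun Z => ?_⟩
  have hΦ : (Φ _ (𝟙 _)).precomp = Φ Z := funext fun h => by
    simp only [Φ, Equiv.trans_apply, Equiv.ofBijective_apply]
    rw [← cowedgeIhomEquivWedge_postcomp_pre, ← Cowedge.postcomp_comp, ← homIhomUnitEquiv_comp,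
      Category.comp_id]
  exact hΦ ▸ (Φ Z).bijective

end EndOfDuals

end Coend

end NatCoend

open NatCoend

theorem stmt14_general {C : Type*} [SmallCategory C] {V : Type*} [Category V]
    [MonoidalCategory V] [SymmetricCategory V] [MonoidalClosed V]
    (F G : C ⥤ V) (D : Cᵒᵖ ⥤ V)
    (p : ∀ c : C, ExactPairing (D.obj (op c)) (G.obj c))
    (hη : ∀ {c c' : C} (f : c ⟶ c'),
      (p c').coevaluation' ≫ (D.map f.op ▷ G.obj c') =
        (p c).coevaluation' ≫ (D.obj (op c) ◁ G.map f))
    (T : V) (ι : ∀ c : C, F.obj c ⊗ D.obj (op c) ⟶ T)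
    (hdin : ∀ {c c' : C} (f : c ⟶ c'),
      (F.map f ▷ D.obj (op c')) ≫ ι c' = (F.obj c ◁ D.map f.op) ≫ ι c)
    (huniv : ∀ (Z : V) (w : ∀ c : C, F.obj c ⊗ D.obj (op c) ⟶ Z),
      (∀ {c c' : C} (f : c ⟶ c'),
        (F.map f ▷ D.obj (op c')) ≫ w c' = (F.obj c ◁ D.map f.op) ≫ w c) →
      ∃! h : T ⟶ Z, ∀ c : C, ι c ≫ h = w c) :
    (∃ π : ∀ c : C, (ihom T).obj (𝟙_ V) ⟶ (ihom (F.obj c)).obj (G.obj c),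
      (∀ {c c' : C} (f : c ⟶ c'),
        π c ≫ (ihom (F.obj c)).map (G.map f) =
          π c' ≫ (MonoidalClosed.pre (F.map f)).app (G.obj c')) ∧
      (∀ (Z : V) (w : ∀ c : C, Z ⟶ (ihom (F.obj c)).obj (G.obj c)),
        (∀ {c c' : C} (f : c ⟶ c'),
          w c ≫ (ihom (F.obj c)).map (G.map f) =
            w c' ≫ (MonoidalClosed.pre (F.map f)).app (G.obj c')) →
        ∃! h : Z ⟶ (ihom T).obj (𝟙_ V), ∀ c : C, h ≫ π c = w c)) ∧
    Nonempty ((T ⟶ 𝟙_ V) ≃ (F ⟶ G)) := by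
  let := p
  have hι : Cowedge.IsUniversal (⟨ι, hdin⟩ : Cowedge F D T) :=
    Cowedge.isUniversal_of_existsUnique _ fun Z w => huniv Z w.1 w.2
  obtain ⟨π, hπ⟩ := hι.exists_isUniversal_wedge_ihom hη
  exact ⟨⟨π.1, π.2, fun Z w hw => hπ.existsUnique ⟨w, hw⟩⟩,
    ⟨(Equiv.ofBijective _ (hι _)).trans (cowedgeUnitEquivNatTrans G hη)⟩⟩

/-- Let `C` be small, `V` a cocomplete symmetric monoidal closed category, `F G : C ⥤ V`
with each `G c` having a right dual `D c` (depending functorially on `c`, with dinatural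
evaluations and coevaluations).  If `(T, ι)` is the coend `Nat^∨(F,G) = ∫^C F c ⊗ (G c)^∧`,
then the internal hom `Hom(T, I)` is an end `∫_C Hom(F c, G c)`; in particular morphisms
`T ⟶ I` in `V` correspond bijectively to natural transformations `F ⟶ G`. -/
theorem stmt14 {C : Type*} [SmallCategory C] {V : Type*} [Category V]
    [MonoidalCategory V] [SymmetricCategory V] [MonoidalClosed V] [Limits.HasColimits V]
    (F G : C ⥤ V) (D : Cᵒᵖ ⥤ V)
    (p : ∀ c : C, ExactPairing (D.obj (op c)) (G.obj c))
    (hε : ∀ {c c' : C} (f : c ⟶ c'),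
      (G.map f ▷ D.obj (op c')) ≫ (p c').evaluation' =
        (G.obj c ◁ D.map f.op) ≫ (p c).evaluation')
    (hη : ∀ {c c' : C} (f : c ⟶ c'),
      (p c').coevaluation' ≫ (D.map f.op ▷ G.obj c') =
        (p c).coevaluation' ≫ (D.obj (op c) ◁ G.map f))
    (T : V) (ι : ∀ c : C, F.obj c ⊗ D.obj (op c) ⟶ T)
    (hdin : ∀ {c c' : C} (f : c ⟶ c'),
      (F.map f ▷ D.obj (op c')) ≫ ι c' = (F.obj c ◁ D.map f.op) ≫ ι c)
    (huniv : ∀ (Z : V) (w : ∀ c : C, F.obj c ⊗ D.obj (op c) ⟶ Z),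
      (∀ {c c' : C} (f : c ⟶ c'),
        (F.map f ▷ D.obj (op c')) ≫ w c' = (F.obj c ◁ D.map f.op) ≫ w c) →
      ∃! h : T ⟶ Z, ∀ c : C, ι c ≫ h = w c) :
    (∃ π : ∀ c : C, (ihom T).obj (𝟙_ V) ⟶ (ihom (F.obj c)).obj (G.obj c),
      (∀ {c c' : C} (f : c ⟶ c'),
        π c ≫ (ihom (F.obj c)).map (G.map f) =
          π c' ≫ (MonoidalClosed.pre (F.map f)).app (G.obj c')) ∧
      (∀ (Z : V) (w : ∀ c : C, Z ⟶ (ihom (F.obj c)).obj (G.obj c)),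
        (∀ {c c' : C} (f : c ⟶ c'),
          w c ≫ (ihom (F.obj c)).map (G.map f) =
            w c' ≫ (MonoidalClosed.pre (F.map f)).app (G.obj c')) →
        ∃! h : Z ⟶ (ihom T).obj (𝟙_ V), ∀ c : C, h ≫ π c = w c)) ∧
    Nonempty ((T ⟶ 𝟙_ V) ≃ (F ⟶ G)) :=
  stmt14_general F G D p hη T ι hdin huniv
end

section
/- Let C be a small category, V a cocomplete symmetric monoidal closed category, and G : C → V a functor with each GC having a right dual. Then there is an adjunction Nat^∨(−, G) ⊣ (−) ⊗ G between V^C and V: morphisms Nat^∨(F, G) → V in V correspond naturally and bijectively to natural transformations F ⇒ V ⊗ G (where V ⊗ G denotes the functor C ↦ V ⊗ GC). -/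
/-!
Pulling the string of the duality `D c ⊣ G c` turns a morphism `F c ⊗ D c ⟶ V₀` into a morphism
`F c ⟶ V₀ ⊗ G c` and back. Because the evaluations are compatible with `G.map f` and `D.map f.op`,
this bijection carries the dinaturality condition of a cowedge under `F ⊗ D` exactly to the
naturality condition of a transformation `F ⟶ V₀ ⊗ G`. By the universal property of the coend,
morphisms `T ⟶ V₀` are the same as such cowedges.
-/

open CategoryTheory MonoidalCategory Opposite

/-- For `G : C ⥤ V` and `V₀ : V`, the functor `c ↦ V₀ ⊗ G c`. -/
def tensorWith {C : Type*} [SmallCategory C] {V : Type*} [Category V]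
    [MonoidalCategory V] (G : C ⥤ V) (V₀ : V) : C ⥤ V where
  obj c := V₀ ⊗ G.obj c
  map f := V₀ ◁ G.map f
  map_id := by intro c; simp
  map_comp := by intro a b c f g; simp

section

variable {V : Type*} [Category V] [MonoidalCategory V]

lemma tensorRightHomEquiv_symm_comp_whiskerLeft {Y₁ Y₁' Y₂ Y₂' X Z : V}
    (p₁ : ExactPairing Y₁ Y₁') (p₂ : ExactPairing Y₂ Y₂') (g : Y₁' ⟶ Y₂') (d : Y₂ ⟶ Y₁)
    (hε : g ▷ Y₂ ≫ p₂.evaluation' = Y₁' ◁ d ≫ p₁.evaluation') (k : X ⟶ Z ⊗ Y₁') :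
    (@tensorRightHomEquiv V _ _ X Y₂ Y₂' Z p₂).symm (k ≫ Z ◁ g) =
      X ◁ d ≫ (@tensorRightHomEquiv V _ _ X Y₁ Y₁' Z p₁).symm k := by
  dsimp [tensorRightHomEquiv]
  calc (k ≫ Z ◁ g) ▷ Y₂ ≫ (α_ _ _ _).hom ≫ Z ◁ p₂.evaluation' ≫ (ρ_ Z).hom
      = k ▷ Y₂ ≫ (α_ _ _ _).hom ≫ Z ◁ (g ▷ Y₂ ≫ p₂.evaluation') ≫ (ρ_ Z).hom := by
        simp
    _ = k ▷ Y₂ ≫ (α_ _ _ _).hom ≫ Z ◁ (Y₁' ◁ d ≫ p₁.evaluation') ≫ (ρ_ Z).hom := by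
        rw [hε]
    _ = X ◁ d ≫ k ▷ Y₁ ≫ (α_ _ _ _).hom ≫ Z ◁ p₁.evaluation' ≫ (ρ_ Z).hom := by
        rw [MonoidalCategory.whiskerLeft_comp_assoc, ← associator_naturality_right_assoc,
          ← whisker_exchange_assoc]

variable {C : Type*} [SmallCategory C]

/-- The cowedge condition for `c ↦ F c ⊗ D c`, whose universal cowedge is the coend
`∫^C F c ⊗ D c`. -/
def IsDinatural (F : C ⥤ V) (D : Cᵒᵖ ⥤ V) {Z : V} (w : ∀ c, F.obj c ⊗ D.obj (op c) ⟶ Z) :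
    Prop :=
  ∀ {c c' : C} (f : c ⟶ c'), F.map f ▷ D.obj (op c') ≫ w c' = F.obj c ◁ D.map f.op ≫ w c

lemma IsDinatural.comp {F : C ⥤ V} {D : Cᵒᵖ ⥤ V} {T Z : V}
    {ι : ∀ c, F.obj c ⊗ D.obj (op c) ⟶ T} (hι : IsDinatural F D ι) (h : T ⟶ Z) :
    IsDinatural F D (fun c => ι c ≫ h) :=
  fun f => by simp only [← Category.assoc, hι f]

noncomputable def homEquivDinatural {F : C ⥤ V} {D : Cᵒᵖ ⥤ V} {T Z : V}
    (ι : ∀ c, F.obj c ⊗ D.obj (op c) ⟶ T) (hι : IsDinatural F D ι)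
    (huniv : ∀ w, IsDinatural F D w → ∃! h : T ⟶ Z, ∀ c, ι c ≫ h = w c) :
    (T ⟶ Z) ≃ {w : ∀ c, F.obj c ⊗ D.obj (op c) ⟶ Z // IsDinatural F D w} where
  toFun h := ⟨fun c => ι c ≫ h, hι.comp h⟩
  invFun w := (huniv w.1 w.2).choose
  left_inv h := (huniv _ (hι.comp h)).unique (huniv _ (hι.comp h)).choose_spec.1 fun _ => rfl
  right_inv w := Subtype.ext (funext (huniv w.1 w.2).choose_spec.1)

variable {F G : C ⥤ V} {D : Cᵒᵖ ⥤ V} (p : ∀ c, ExactPairing (D.obj (op c)) (G.obj c))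
  {Z : V}

lemma isDinatural_iff_naturality (hε : ∀ {c c' : C} (f : c ⟶ c'),
      G.map f ▷ D.obj (op c') ≫ (p c').evaluation' = G.obj c ◁ D.map f.op ≫ (p c).evaluation')
    (w : ∀ c, F.obj c ⊗ D.obj (op c) ⟶ Z) :
    IsDinatural F D w ↔ ∀ {c c' : C} (f : c ⟶ c'),
      F.map f ≫ @tensorRightHomEquiv V _ _ _ _ _ Z (p c') (w c') =
        @tensorRightHomEquiv V _ _ _ _ _ Z (p c) (w c) ≫ Z ◁ G.map f := by
  refine forall_congr' fun c => forall_congr' fun c' => forall_congr' fun f => ?_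
  rw [← (@tensorRightHomEquiv V _ _ (F.obj c) _ _ Z (p c')).symm.injective.eq_iff,
    tensorRightHomEquiv_symm_naturality,
    tensorRightHomEquiv_symm_comp_whiskerLeft (p c) (p c') _ _ (hε f), Equiv.symm_apply_apply,
    Equiv.symm_apply_apply]

def dinaturalEquivNatTrans (hε : ∀ {c c' : C} (f : c ⟶ c'),
      G.map f ▷ D.obj (op c') ≫ (p c').evaluation' = G.obj c ◁ D.map f.op ≫ (p c).evaluation') :
    {w : ∀ c, F.obj c ⊗ D.obj (op c) ⟶ Z // IsDinatural F D w} ≃ (F ⟶ tensorWith G Z) where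
  toFun w :=
    { app c := @tensorRightHomEquiv V _ _ _ _ _ Z (p c) (w.1 c)
      naturality _ _ f := (isDinatural_iff_naturality p hε w.1).1 w.2 f }
  invFun θ :=
    ⟨fun c => (@tensorRightHomEquiv V _ _ _ _ _ Z (p c)).symm (θ.app c),
      by
        rw [isDinatural_iff_naturality p hε]
        intro c c' f
        -- `θ.app c` lands in `(tensorWith G Z).obj c`, which is `Z ⊗ G.obj c` only after unfolding
        erw [Equiv.apply_symm_apply, Equiv.apply_symm_apply]
        exact θ.naturality f⟩
  left_inv w := Subtype.ext (funext fun c => Equiv.symm_apply_apply _ _)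
  right_inv θ := NatTrans.ext (funext fun c => Equiv.apply_symm_apply _ _)

end

theorem stmt15_general {C : Type*} [SmallCategory C] {V : Type*} [Category V]
    [MonoidalCategory V]
    (F G : C ⥤ V) (D : Cᵒᵖ ⥤ V)
    (p : ∀ c : C, ExactPairing (D.obj (op c)) (G.obj c))
    (hε : ∀ {c c' : C} (f : c ⟶ c'),
      (G.map f ▷ D.obj (op c')) ≫ (p c').evaluation' =
        (G.obj c ◁ D.map f.op) ≫ (p c).evaluation')
    (T : V) (ι : ∀ c : C, F.obj c ⊗ D.obj (op c) ⟶ T)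
    (hdin : ∀ {c c' : C} (f : c ⟶ c'),
      (F.map f ▷ D.obj (op c')) ≫ ι c' = (F.obj c ◁ D.map f.op) ≫ ι c)
    (huniv : ∀ (Z : V) (w : ∀ c : C, F.obj c ⊗ D.obj (op c) ⟶ Z),
      (∀ {c c' : C} (f : c ⟶ c'),
        (F.map f ▷ D.obj (op c')) ≫ w c' = (F.obj c ◁ D.map f.op) ≫ w c) →
      ∃! h : T ⟶ Z, ∀ c : C, ι c ≫ h = w c) :
    ∀ V₀ : V, ∃ e : (T ⟶ V₀) ≃ (F ⟶ tensorWith G V₀),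
      ∀ (f : T ⟶ V₀) (c : C),
        (e f).app c =
          (ρ_ (F.obj c)).inv ≫ (F.obj c ◁ (p c).coevaluation') ≫
            (α_ (F.obj c) (D.obj (op c)) (G.obj c)).inv ≫ ((ι c ≫ f) ▷ G.obj c) :=
  fun V₀ => ⟨(homEquivDinatural ι hdin (huniv V₀)).trans (dinaturalEquivNatTrans p hε),
    fun _ _ => by rfl⟩

/-- Let `C` be small, `V` a cocomplete symmetric monoidal closed category, and `G : C ⥤ V`
with each `G c` having a right dual.  If `(T, ι)` is the coend
`Nat^∨(F, G) = ∫^C F c ⊗ (G c)^∧`, then there is an adjunction `Nat^∨(−, G) ⊣ (−) ⊗ G`: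
morphisms `T ⟶ V₀` in `V` correspond naturally and bijectively to natural transformations
`F ⟶ V₀ ⊗ G`, the bijection being given by the coevaluation of the dualities through `ι`. -/
theorem stmt15 {C : Type*} [SmallCategory C] {V : Type*} [Category V]
    [MonoidalCategory V] [SymmetricCategory V] [MonoidalClosed V] [Limits.HasColimits V]
    (F G : C ⥤ V) (D : Cᵒᵖ ⥤ V)
    (p : ∀ c : C, ExactPairing (D.obj (op c)) (G.obj c))
    (hε : ∀ {c c' : C} (f : c ⟶ c'),
      (G.map f ▷ D.obj (op c')) ≫ (p c').evaluation' =
        (G.obj c ◁ D.map f.op) ≫ (p c).evaluation')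
    (hη : ∀ {c c' : C} (f : c ⟶ c'),
      (p c').coevaluation' ≫ (D.map f.op ▷ G.obj c') =
        (p c).coevaluation' ≫ (D.obj (op c) ◁ G.map f))
    (T : V) (ι : ∀ c : C, F.obj c ⊗ D.obj (op c) ⟶ T)
    (hdin : ∀ {c c' : C} (f : c ⟶ c'),
      (F.map f ▷ D.obj (op c')) ≫ ι c' = (F.obj c ◁ D.map f.op) ≫ ι c)
    (huniv : ∀ (Z : V) (w : ∀ c : C, F.obj c ⊗ D.obj (op c) ⟶ Z),
      (∀ {c c' : C} (f : c ⟶ c'),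
        (F.map f ▷ D.obj (op c')) ≫ w c' = (F.obj c ◁ D.map f.op) ≫ w c) →
      ∃! h : T ⟶ Z, ∀ c : C, ι c ≫ h = w c) :
    ∀ V₀ : V, ∃ e : (T ⟶ V₀) ≃ (F ⟶ tensorWith G V₀),
      ∀ (f : T ⟶ V₀) (c : C),
        (e f).app c =
          (ρ_ (F.obj c)).inv ≫ (F.obj c ◁ (p c).coevaluation') ≫
            (α_ (F.obj c) (D.obj (op c)) (G.obj c)).inv ≫ ((ι c ≫ f) ▷ G.obj c) :=
  stmt15_general F G D p hε T ι hdin huniv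
end

section
/- Let V = Vec_K, C a small K-linear category and F : C → Vec_K a K-linear functor with finite-dimensional values (or more generally the stated coend setting). For each object C of C, the coevaluation η_C : FC → End^∨(F) ⊗ FC, given by η_C(v) = Σ_i [v ⊗ e_i^∨] ⊗ e_i for a basis {e_i} of FC, makes FC a left End^∨(F)-comodule, and for every morphism f : C → C' in C the map F(f) : FC → FC' is a morphism of End^∨(F)-comodules. -/
open CategoryTheory MonoidalCategory Opposite

namespace CategoryTheory.MonoidalCategory

/-!
The counit law is the zigzag identity of the pairing. For coassociativity, both sides insert two
copies of the coevaluation next to each other and then apply `ι ⊗ ι`: this is coherence plus one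
interchange of independent morphisms. Comodule maps come from the dinaturality of `ι` and of the
coevaluations.
-/

variable {V : Type*} [Category V] [MonoidalCategory V] {X Y T : V}

def coaction (η : 𝟙_ V ⟶ Y ⊗ X) (ι : X ⊗ Y ⟶ T) : X ⟶ T ⊗ X :=
  (ρ_ X).inv ≫ (X ◁ η) ≫ (α_ X Y X).inv ≫ (ι ▷ X)

theorem coaction_counit (p : ExactPairing Y X) (ι : X ⊗ Y ⟶ T) (ε : T ⟶ 𝟙_ V)
    (hε : ι ≫ ε = p.evaluation') :
    coaction p.coevaluation' ι ≫ (ε ▷ X) = (λ_ X).inv := by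
  simp only [coaction, Category.assoc]
  rw [← comp_whiskerRight, hε, ExactPairing.coevaluation_evaluation']
  monoidal

theorem coaction_coassoc (η : 𝟙_ V ⟶ Y ⊗ X) (ι : X ⊗ Y ⟶ T) (Δ : T ⟶ T ⊗ T)
    (hΔ : ι ≫ Δ = ((X ◁ (λ_ Y).inv) ≫ (X ◁ (η ▷ Y)) ≫ (X ◁ (α_ Y X Y).hom) ≫
      (α_ X Y (X ⊗ Y)).inv) ≫ (ι ⊗ₘ ι)) :
    coaction η ι ≫ (Δ ▷ X) ≫ (α_ T T X).hom = coaction η ι ≫ (T ◁ coaction η ι) := by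
  have hL : coaction η ι ≫ (Δ ▷ X) ≫ (α_ T T X).hom =
      (ρ_ X).inv ⊗≫ (X ◁ (η ⊗ₘ η)) ⊗≫ ((ι ⊗ₘ ι) ▷ X) ⊗≫ 𝟙 _ := by
    simp only [coaction, Category.assoc]
    rw [← comp_whiskerRight_assoc, hΔ, tensorHom_def' η η, tensorHom_def ι ι]
    monoidal
  have hR : coaction η ι ≫ (T ◁ coaction η ι) =
      (ρ_ X).inv ⊗≫ (X ◁ (η ⊗ₘ η)) ⊗≫ ((ι ⊗ₘ ι) ▷ X) ⊗≫ 𝟙 _ := by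
    nth_rw 1 [coaction]
    rw [Category.assoc, Category.assoc, Category.assoc, ← whisker_exchange, coaction,
      tensorHom_def η η, tensorHom_def' ι ι]
    monoidal
  rw [hL, hR]

theorem coaction_natural {X' Y' : V} (f : X ⟶ X') (g : Y' ⟶ Y)
    (η : 𝟙_ V ⟶ Y ⊗ X) (η' : 𝟙_ V ⟶ Y' ⊗ X') (ι : X ⊗ Y ⟶ T) (ι' : X' ⊗ Y' ⟶ T)
    (hι : (f ▷ Y') ≫ ι' = (X ◁ g) ≫ ι) (hη : η' ≫ (g ▷ X') = η ≫ (Y ◁ f)) :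
    f ≫ coaction η' ι' = coaction η ι ≫ (T ◁ f) := by
  rw [coaction, coaction, rightUnitor_inv_naturality_assoc, ← whisker_exchange_assoc,
    associator_inv_naturality_left_assoc, ← comp_whiskerRight, hι, comp_whiskerRight,
    ← associator_inv_naturality_middle_assoc, ← whiskerLeft_comp_assoc, hη,
    whiskerLeft_comp_assoc, associator_inv_naturality_right_assoc, whisker_exchange]
  simp only [Category.assoc]

end CategoryTheory.MonoidalCategory

theorem stmt17_general {K : Type*} [Field K]
    {C : Type*} [SmallCategory C]
    (F : C ⥤ ModuleCat K)
    (D : Cᵒᵖ ⥤ ModuleCat K)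
    (p : ∀ c : C, ExactPairing (D.obj (op c)) (F.obj c))
    (hη : ∀ {c c' : C} (f : c ⟶ c'),
      (p c').coevaluation' ≫ (D.map f.op ▷ F.obj c') =
        (p c).coevaluation' ≫ (D.obj (op c) ◁ F.map f))
    (T : ModuleCat K) (ι : ∀ c : C, F.obj c ⊗ D.obj (op c) ⟶ T)
    (hdin : ∀ {c c' : C} (f : c ⟶ c'),
      (F.map f ▷ D.obj (op c')) ≫ ι c' = (F.obj c ◁ D.map f.op) ≫ ι c)
    (Δ : T ⟶ T ⊗ T) (ε : T ⟶ 𝟙_ (ModuleCat K))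
    (hΔ : ∀ c : C, ι c ≫ Δ =
      ((F.obj c ◁ (λ_ (D.obj (op c))).inv) ≫
        (F.obj c ◁ ((p c).coevaluation' ▷ D.obj (op c))) ≫
          (F.obj c ◁ (α_ (D.obj (op c)) (F.obj c) (D.obj (op c))).hom) ≫
            (α_ (F.obj c) (D.obj (op c)) (F.obj c ⊗ D.obj (op c))).inv) ≫ (ι c ⊗ₘ ι c))
    (hcε : ∀ c : C, ι c ≫ ε = (p c).evaluation')
    (ρc : ∀ c : C, F.obj c ⟶ T ⊗ F.obj c)
    (hρ : ∀ c : C, ρc c =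
      (ρ_ (F.obj c)).inv ≫ (F.obj c ◁ (p c).coevaluation') ≫
        (α_ (F.obj c) (D.obj (op c)) (F.obj c)).inv ≫ (ι c ▷ F.obj c)) :
    (∀ c : C, ρc c ≫ (ε ▷ F.obj c) = (λ_ (F.obj c)).inv) ∧
    (∀ c : C, ρc c ≫ (Δ ▷ F.obj c) ≫ (α_ T T (F.obj c)).hom =
      ρc c ≫ (T ◁ ρc c)) ∧
    (∀ {c c' : C} (f : c ⟶ c'),
      F.map f ≫ ρc c' = ρc c ≫ (T ◁ F.map f)) := by
  refine ⟨fun c => ?_, fun c => ?_, fun f => ?_⟩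
  · rw [hρ]
    exact coaction_counit (p c) (ι c) ε (hcε c)
  · rw [hρ]
    exact coaction_coassoc _ (ι c) Δ (hΔ c)
  · rw [hρ, hρ]
    exact coaction_natural (F.map f) (D.map f.op) _ _ (ι _) (ι _) (hdin f) (hη f)

/-- Let `V = Vec_K` (`ModuleCat K` for a field `K`), `C` a small `K`-linear category and
`F : C ⥤ Vec_K` a `K`-linear functor with values having (right) duals, in the stated coend
setting: `(T, ι)` is the coend `End^∨(F)` with its coalgebra structure `(Δ, ε)`.
Then for every object `c`, the coevaluation `ρc : F c ⟶ T ⊗ F c` (given by inserting the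
dual-pairing coevaluation and projecting into the coend) makes `F c` a left
`End^∨(F)`-comodule, and for every `f : c ⟶ c'` the map `F f` is a morphism of
`End^∨(F)`-comodules. -/
theorem stmt17 {K : Type*} [Field K]
    {C : Type*} [SmallCategory C] [Preadditive C] [CategoryTheory.Linear K C]
    (F : C ⥤ ModuleCat K) [F.Additive] [F.Linear K]
    (D : Cᵒᵖ ⥤ ModuleCat K)
    (p : ∀ c : C, ExactPairing (D.obj (op c)) (F.obj c))
    (hε : ∀ {c c' : C} (f : c ⟶ c'),
      (F.map f ▷ D.obj (op c')) ≫ (p c').evaluation' =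
        (F.obj c ◁ D.map f.op) ≫ (p c).evaluation')
    (hη : ∀ {c c' : C} (f : c ⟶ c'),
      (p c').coevaluation' ≫ (D.map f.op ▷ F.obj c') =
        (p c).coevaluation' ≫ (D.obj (op c) ◁ F.map f))
    (T : ModuleCat K) (ι : ∀ c : C, F.obj c ⊗ D.obj (op c) ⟶ T)
    (hdin : ∀ {c c' : C} (f : c ⟶ c'),
      (F.map f ▷ D.obj (op c')) ≫ ι c' = (F.obj c ◁ D.map f.op) ≫ ι c)
    (huniv : ∀ (Z : ModuleCat K) (w : ∀ c : C, F.obj c ⊗ D.obj (op c) ⟶ Z),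
      (∀ {c c' : C} (f : c ⟶ c'),
        (F.map f ▷ D.obj (op c')) ≫ w c' = (F.obj c ◁ D.map f.op) ≫ w c) →
      ∃! h : T ⟶ Z, ∀ c : C, ι c ≫ h = w c)
    (Δ : T ⟶ T ⊗ T) (ε : T ⟶ 𝟙_ (ModuleCat K))
    (hΔ : ∀ c : C, ι c ≫ Δ =
      ((F.obj c ◁ (λ_ (D.obj (op c))).inv) ≫
        (F.obj c ◁ ((p c).coevaluation' ▷ D.obj (op c))) ≫
          (F.obj c ◁ (α_ (D.obj (op c)) (F.obj c) (D.obj (op c))).hom) ≫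
            (α_ (F.obj c) (D.obj (op c)) (F.obj c ⊗ D.obj (op c))).inv) ≫ (ι c ⊗ₘ ι c))
    (hcε : ∀ c : C, ι c ≫ ε = (p c).evaluation')
    (ρc : ∀ c : C, F.obj c ⟶ T ⊗ F.obj c)
    (hρ : ∀ c : C, ρc c =
      (ρ_ (F.obj c)).inv ≫ (F.obj c ◁ (p c).coevaluation') ≫
        (α_ (F.obj c) (D.obj (op c)) (F.obj c)).inv ≫ (ι c ▷ F.obj c)) :
    (∀ c : C, ρc c ≫ (ε ▷ F.obj c) = (λ_ (F.obj c)).inv) ∧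
    (∀ c : C, ρc c ≫ (Δ ▷ F.obj c) ≫ (α_ T T (F.obj c)).hom =
      ρc c ≫ (T ◁ ρc c)) ∧
    (∀ {c c' : C} (f : c ⟶ c'),
      F.map f ≫ ρc c' = ρc c ≫ (T ◁ F.map f)) :=
  stmt17_general F D p hη T ι hdin Δ ε hΔ hcε ρc hρ
end

section
/- Let K be a field, C a K-coalgebra, and M a C-comodule with coaction Δ_M : M → C ⊗ M. Then every element v ∈ M is contained in a finite-dimensional subcomodule of M: if Δ_M(v) = Σ_{j=1}^n a_j ⊗ v_j with the a_j part of a basis of C, then the subspace spanned by v and the v_j is a subcomodule containing v. -/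
/-!
For `z ∈ C ⊗ M`, the slices `(f ⊗ id) z`, `f ∈ C^*`, span the smallest submodule `N` with
`z ∈ C ⊗ N`; for a basis `(bᵢ)` of `C` it is spanned by the finitely many coefficients `zᵢ`
of `z = ∑ bᵢ ⊗ zᵢ`, which are the slices by the coordinate forms. Take `N` spanned by the
slices of `ρ v`. Counitality gives `v = (ε ⊗ id)(ρ v) ∈ N`, and coassociativity gives
`ρ ((f ⊗ id)(ρ v)) = (((f ⊗ id) ∘ Δ) ⊗ id)(ρ v)`, which lies in `C ⊗ N` since `ρ v` does.
-/

open TensorProduct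

namespace TensorProduct

variable {R C M P : Type*} [CommSemiring R] [AddCommMonoid C] [Module R C]
  [AddCommMonoid M] [Module R M] [AddCommMonoid P] [Module R P]

def sliceLeft (f : Module.Dual R C) : C ⊗[R] M →ₗ[R] M :=
  TensorProduct.lid R M ∘ₗ f.rTensor M

@[simp]
lemma sliceLeft_tmul (f : Module.Dual R C) (c : C) (m : M) :
    sliceLeft f (c ⊗ₜ[R] m) = f c • m := by
  simp [sliceLeft]

lemma sliceLeft_lTensor (f : Module.Dual R C) (g : M →ₗ[R] P) (z : C ⊗[R] M) :
    sliceLeft f (g.lTensor C z) = g (sliceLeft f z) := by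
  induction z with
  | zero => simp
  | tmul c m => simp
  | add x y hx hy => simp [hx, hy]

lemma sliceLeft_assoc (f : Module.Dual R C) (w : (C ⊗[R] C) ⊗[R] M) :
    sliceLeft f (TensorProduct.assoc R C C M w) = (sliceLeft f).rTensor M w := by
  induction w with
  | zero => simp
  | tmul x m =>
    induction x with
    | zero => simp
    | tmul c c' => simp [smul_tmul']
    | add x y hx hy => simp [add_tmul, hx, hy]
  | add x y hx hy => simp [hx, hy]

lemma coaction_sliceLeft [Coalgebra R C] {ρ : M →ₗ[R] C ⊗[R] M}
    (hcoassoc : ∀ m : M,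
      (Coalgebra.comul (R := R) (A := C)).rTensor M (ρ m) =
        (TensorProduct.assoc R C C M).symm (ρ.lTensor C (ρ m)))
    (f : Module.Dual R C) (m : M) :
    ρ (sliceLeft f (ρ m)) = (sliceLeft f ∘ₗ Coalgebra.comul).rTensor M (ρ m) := by
  rw [← sliceLeft_lTensor, ← LinearEquiv.apply_symm_apply (TensorProduct.assoc R C C M)
    (ρ.lTensor C (ρ m)), ← hcoassoc, sliceLeft_assoc, LinearMap.rTensor_comp_apply]

lemma rTensor_mem_range_lTensor {N : Submodule R M} {z : C ⊗[R] M}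
    (hz : z ∈ LinearMap.range (N.subtype.lTensor C)) (g : C →ₗ[R] C) :
    g.rTensor M z ∈ LinearMap.range (N.subtype.lTensor C) := by
  obtain ⟨y, rfl⟩ := hz
  refine ⟨g.rTensor N y, ?_⟩
  rw [← LinearMap.comp_apply, ← LinearMap.comp_apply, LinearMap.lTensor_comp_rTensor,
    LinearMap.rTensor_comp_lTensor]

def sliceSpan (z : C ⊗[R] M) : Submodule R M :=
  Submodule.span R (Set.range fun f : Module.Dual R C ↦ sliceLeft f z)

lemma sliceLeft_mem_sliceSpan (f : Module.Dual R C) (z : C ⊗[R] M) :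
    sliceLeft f z ∈ sliceSpan z :=
  Submodule.subset_span ⟨f, rfl⟩

lemma sliceSpan_le_of_mem_range_lTensor {N : Submodule R M} {z : C ⊗[R] M}
    (hz : z ∈ LinearMap.range (N.subtype.lTensor C)) : sliceSpan z ≤ N := by
  obtain ⟨y, rfl⟩ := hz
  refine Submodule.span_le.mpr ?_
  rintro _ ⟨f, rfl⟩
  change sliceLeft f (N.subtype.lTensor C y) ∈ N
  rw [sliceLeft_lTensor]
  exact (sliceLeft f y).2

lemma mem_range_lTensor_span_range_equivFinsuppOfBasisLeft {ι : Type*} [DecidableEq ι]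
    (b : Module.Basis ι R C) (z : C ⊗[R] M) :
    z ∈ LinearMap.range ((Submodule.span R
      (Set.range (equivFinsuppOfBasisLeft (N := M) b z))).subtype.lTensor C) := by
  set c := equivFinsuppOfBasisLeft (N := M) b z
  have hz : (c.sum fun i m ↦ b i ⊗ₜ[R] m) = z := by
    rw [← equivFinsuppOfBasisLeft_symm_apply, LinearEquiv.symm_apply_apply]
  nth_rw 1 [← hz]
  exact Submodule.finsuppSum_mem _ _ _ _ fun i _ ↦
    ⟨b i ⊗ₜ ⟨c i, Submodule.subset_span ⟨i, rfl⟩⟩, rfl⟩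

lemma sliceSpan_eq_span_range_equivFinsuppOfBasisLeft {ι : Type*} [DecidableEq ι]
    (b : Module.Basis ι R C) (z : C ⊗[R] M) :
    sliceSpan z = Submodule.span R (Set.range (equivFinsuppOfBasisLeft (N := M) b z)) := by
  refine le_antisymm (sliceSpan_le_of_mem_range_lTensor
    (mem_range_lTensor_span_range_equivFinsuppOfBasisLeft b z)) (Submodule.span_le.mpr ?_)
  rintro _ ⟨i, rfl⟩
  rw [equivFinsuppOfBasisLeft_apply]
  exact sliceLeft_mem_sliceSpan (b.coord i) z

variable [Module.Free R C]

lemma fg_sliceSpan (z : C ⊗[R] M) : (sliceSpan z).FG := by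
  classical
  rw [sliceSpan_eq_span_range_equivFinsuppOfBasisLeft (Module.Free.chooseBasis R C)]
  exact Submodule.fg_span (Finsupp.finite_range _)

lemma mem_range_lTensor_sliceSpan (z : C ⊗[R] M) :
    z ∈ LinearMap.range ((sliceSpan z).subtype.lTensor C) := by
  classical
  rw [sliceSpan_eq_span_range_equivFinsuppOfBasisLeft (Module.Free.chooseBasis R C)]
  exact mem_range_lTensor_span_range_equivFinsuppOfBasisLeft _ z

lemma coaction_mem_range_lTensor_sliceSpan [Coalgebra R C] {ρ : M →ₗ[R] C ⊗[R] M}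
    (hcoassoc : ∀ m : M,
      (Coalgebra.comul (R := R) (A := C)).rTensor M (ρ m) =
        (TensorProduct.assoc R C C M).symm (ρ.lTensor C (ρ m))) {m n : M}
    (hn : n ∈ sliceSpan (ρ m)) :
    ρ n ∈ LinearMap.range ((sliceSpan (ρ m)).subtype.lTensor C) := by
  suffices sliceSpan (ρ m) ≤
      (LinearMap.range ((sliceSpan (ρ m)).subtype.lTensor C)).comap ρ from this hn
  refine Submodule.span_le.mpr ?_
  rintro _ ⟨f, rfl⟩
  rw [SetLike.mem_coe, Submodule.mem_comap, coaction_sliceLeft hcoassoc]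
  exact rTensor_mem_range_lTensor (mem_range_lTensor_sliceSpan _) _

end TensorProduct

/-- Let `K` be a field, `C` a `K`-coalgebra, and `M` a `C`-comodule with coaction
`ρ : M →ₗ[K] C ⊗[K] M` (coassociative and counital).  Then every element `v ∈ M` is
contained in a finite-dimensional subcomodule of `M`: a finite-dimensional subspace `N`
with `v ∈ N` and `ρ(N) ⊆ C ⊗ N`. -/
theorem stmt18 {K : Type*} [Field K]
    {C : Type*} [AddCommGroup C] [Module K C] [Coalgebra K C]
    {M : Type*} [AddCommGroup M] [Module K M]
    (ρ : M →ₗ[K] C ⊗[K] M)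
    (hcoassoc : ∀ m : M,
      (LinearMap.rTensor M (Coalgebra.comul (R := K) (A := C))) (ρ m) =
        (TensorProduct.assoc K C C M).symm ((LinearMap.lTensor C ρ) (ρ m)))
    (hcounit : ∀ m : M,
      (TensorProduct.lid K M)
        ((LinearMap.rTensor M (Coalgebra.counit (R := K) (A := C))) (ρ m)) = m)
    (v : M) :
    ∃ N : Submodule K M, v ∈ N ∧ FiniteDimensional K N ∧
      ∀ n ∈ N, ρ n ∈ LinearMap.range (LinearMap.lTensor C N.subtype) := by
  refine ⟨sliceSpan (ρ v), ?_, Module.Finite.iff_fg.mpr (fg_sliceSpan _),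
    fun n hn ↦ coaction_mem_range_lTensor_sliceSpan hcoassoc hn⟩
  simpa only [sliceLeft, LinearMap.comp_apply, LinearEquiv.coe_coe, hcounit] using
    sliceLeft_mem_sliceSpan Coalgebra.counit (ρ v)
end
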